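/- arXiv:1403.2010 — 2 statements merged into one kernel-verified Lean document; each statement's English description precedes it below -/
import Mathlib

section
/- (Lemma 2, equivalence of optimizers) Fix G an M-by-M real matrix, R_n a K-by-K real positive definite matrix, R_v an M-by-M real positive definite matrix, R_θ a K-by-K real positive semi-definite matrix, and P₀ > 0. Let F be the set of M-by-K real matrices W with Tr(W (R_θ + R_n) Wᵀ) ≤ P₀, let f(W) := Tr(Wᵀ Gᵀ (G W R_n Wᵀ Gᵀ + R_v)⁻¹ G W), and let g(W) := Tr(R_n⁻¹ (Wᵀ Gᵀ R_v⁻¹ G W + R_n⁻¹)⁻¹ R_n⁻¹). Then for any W₀ ∈ F, W₀ maximizes f over F if and only if W₀ minimizes g over F. -/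
open Matrix

lemma fg_sum (M K : ℕ)
    (G : Matrix (Fin M) (Fin M) ℝ)
    (Rn : Matrix (Fin K) (Fin K) ℝ) (hRn : Rn.PosDef)
    (Rv : Matrix (Fin M) (Fin M) ℝ) (hRv : Rv.PosDef)
    (W : Matrix (Fin M) (Fin K) ℝ) :
    (Wᵀ * Gᵀ * (G * W * Rn * Wᵀ * Gᵀ + Rv)⁻¹ * G * W).trace
      = Rn⁻¹.trace - (Rn⁻¹ * (Wᵀ * Gᵀ * Rv⁻¹ * G * W + Rn⁻¹)⁻¹ * Rn⁻¹).trace := by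
  have h1 : G * W * Rn * Wᵀ * Gᵀ = G * W * Rn * (G * W)ᵀ := by
    rw [transpose_mul, ← Matrix.mul_assoc]
  have hBt : Wᵀ * Gᵀ = (G * W)ᵀ := (transpose_mul G W).symm
  rw [h1, hBt]
  set B := G * W with hB
  set Mm := B * Rn * Bᵀ + Rv with hMm
  set N := Bᵀ * Rv⁻¹ * B + Rn⁻¹ with hNd
  rw [show Bᵀ * Rv⁻¹ * G * W + Rn⁻¹ = N by rw [hNd, Matrix.mul_assoc, ← hB]]
  -- positivity
  have hPSD1 : (B * Rn * Bᵀ).PosSemidef := by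
    have := hRn.posSemidef.mul_mul_conjTranspose_same B
    simpa using this
  have hM : Mm.PosDef := Matrix.PosDef.posSemidef_add hPSD1 hRv
  have hPSD2 : (Bᵀ * Rv⁻¹ * B).PosSemidef := by
    have := hRv.inv.posSemidef.mul_mul_conjTranspose_same Bᵀ
    simpa using this
  have hN : N.PosDef := Matrix.PosDef.posSemidef_add hPSD2 hRn.inv
  have hMinv : Mm⁻¹ * Mm = 1 := nonsing_inv_mul Mm ((isUnit_iff_isUnit_det Mm).1 hM.isUnit)
  have hNinv : N * N⁻¹ = 1 := mul_nonsing_inv N ((isUnit_iff_isUnit_det N).1 hN.isUnit)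
  have hRvinv : Rv * Rv⁻¹ = 1 := mul_nonsing_inv Rv ((isUnit_iff_isUnit_det Rv).1 hRv.isUnit)
  have hRninv : Rn * Rn⁻¹ = 1 := mul_nonsing_inv Rn ((isUnit_iff_isUnit_det Rn).1 hRn.isUnit)
  have cRv : ∀ (C : Matrix (Fin M) (Fin K) ℝ), Rv * (Rv⁻¹ * C) = C := fun C => by
    rw [← Matrix.mul_assoc, hRvinv, Matrix.one_mul]
  have cRn : ∀ (C : Matrix (Fin K) (Fin K) ℝ), Rn * (Rn⁻¹ * C) = C := fun C => by
    rw [← Matrix.mul_assoc, hRninv, Matrix.one_mul]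
  have cN : ∀ (C : Matrix (Fin K) (Fin K) ℝ), N * (N⁻¹ * C) = C := fun C => by
    rw [← Matrix.mul_assoc, hNinv, Matrix.one_mul]
  set Y := N⁻¹ * Rn⁻¹ with hY
  have hsub : Bᵀ * (Rv⁻¹ * B) = N - Rn⁻¹ := by
    rw [← Matrix.mul_assoc, hNd]; exact (add_sub_cancel_right _ _).symm
  have step : Bᵀ * (Rv⁻¹ * (B * Y)) = Rn⁻¹ - Rn⁻¹ * Y := by
    have h1 : Bᵀ * (Rv⁻¹ * (B * Y)) = (Bᵀ * (Rv⁻¹ * B)) * Y := by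
      simp only [Matrix.mul_assoc]
    rw [h1, hsub, Matrix.sub_mul, hY, cN]
  have key : Mm * (Rv⁻¹ * (B * Y)) = B := by
    rw [hMm, Matrix.add_mul, cRv]
    have e : B * Rn * Bᵀ * (Rv⁻¹ * (B * Y)) = B * (Rn * (Rn⁻¹ - Rn⁻¹ * Y)) := by
      simp only [Matrix.mul_assoc]; rw [step]
    rw [e, Matrix.mul_sub, hRninv, cRn, Matrix.mul_sub, Matrix.mul_one,
      sub_add_cancel]
  have hMiB : Mm⁻¹ * B = Rv⁻¹ * (B * Y) := by
    calc Mm⁻¹ * B = Mm⁻¹ * (Mm * (Rv⁻¹ * (B * Y))) := by rw [key]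
    _ = (Mm⁻¹ * Mm) * (Rv⁻¹ * (B * Y)) := (Matrix.mul_assoc Mm⁻¹ Mm _).symm
    _ = Rv⁻¹ * (B * Y) := by rw [hMinv, Matrix.one_mul]
  have e3 : Bᵀ * Mm⁻¹ * (G * W) = Bᵀ * (Rv⁻¹ * (B * Y)) := by
    rw [Matrix.mul_assoc, ← hB, hMiB]
  rw [Matrix.mul_assoc (Bᵀ * Mm⁻¹) G W, e3, step, trace_sub]
  congr 1
  rw [hY, Matrix.mul_assoc]

/-- Lemma 2 (equivalence of optimizers): over the power-constrained feasible set `F`,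
`W₀` maximizes `f` iff `W₀` minimizes `g`. -/
theorem maximize_f_iff_minimize_g (M K : ℕ)
    (G : Matrix (Fin M) (Fin M) ℝ)
    (Rn : Matrix (Fin K) (Fin K) ℝ) (hRn : Rn.PosDef)
    (Rv : Matrix (Fin M) (Fin M) ℝ) (hRv : Rv.PosDef)
    (Rθ : Matrix (Fin K) (Fin K) ℝ) (hRθ : Rθ.PosSemidef)
    (P₀ : ℝ) (hP₀ : 0 < P₀)
    (F : Set (Matrix (Fin M) (Fin K) ℝ))
    (hF : F = {W | (W * (Rθ + Rn) * Wᵀ).trace ≤ P₀})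
    (f g : Matrix (Fin M) (Fin K) ℝ → ℝ)
    (hf : ∀ W, f W = (Wᵀ * Gᵀ * (G * W * Rn * Wᵀ * Gᵀ + Rv)⁻¹ * G * W).trace)
    (hg : ∀ W, g W = (Rn⁻¹ * (Wᵀ * Gᵀ * Rv⁻¹ * G * W + Rn⁻¹)⁻¹ * Rn⁻¹).trace)
    (W₀ : Matrix (Fin M) (Fin K) ℝ) (hW₀ : W₀ ∈ F) :
    (∀ W ∈ F, f W ≤ f W₀) ↔ (∀ W ∈ F, g W₀ ≤ g W) := by
  have hfg : ∀ W, f W = Rn⁻¹.trace - g W := by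
    intro W
    rw [hf, hg]
    exact fg_sum M K G Rn hRn Rv hRv W
  constructor
  · intro h W hW
    have := h W hW
    rw [hfg W, hfg W₀] at this
    linarith
  · intro h W hW
    have := h W hW
    rw [hfg W, hfg W₀]
    linarith
end

section
/- (Lemma 2, equality of optimal values) Fix G an M-by-M real matrix, R_n a K-by-K real positive definite matrix, R_v an M-by-M real positive definite matrix, R_θ a K-by-K real positive semi-definite matrix, and P₀ > 0. Let F be the set of M-by-K real matrices W with Tr(W (R_θ + R_n) Wᵀ) ≤ P₀. Then the infimum, over triples (W, γ, Γ) with W ∈ F, γ ∈ ℝ, Γ a symmetric K-by-K real matrix such that Tr(Γ) ≤ γ and the block matrix [[Γ, R_n⁻¹], [R_n⁻¹, Wᵀ Gᵀ R_v⁻¹ G W + R_n⁻¹]] is positive semi-definite, of the value γ, equals Tr(R_n⁻¹) minus the supremum over W ∈ F of Tr(Wᵀ Gᵀ (G W R_n Wᵀ Gᵀ + R_v)⁻¹ G W). -/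
open Matrix

/-! With `S(W) = Wᵀ Gᵀ R_v⁻¹ G W + R_n⁻¹ ≻ 0`, the Schur complement criterion turns the block
constraint into `Γ ⪰ R_n⁻¹ S(W)⁻¹ R_n⁻¹`, so for fixed `W` the least admissible `γ` is
`Tr(R_n⁻¹ S(W)⁻¹ R_n⁻¹)`. The Woodbury identity rewrites this as
`Tr(R_n⁻¹) − Tr(Wᵀ Gᵀ (G W R_n Wᵀ Gᵀ + R_v)⁻¹ G W)`, and minimising over `W ∈ F` is
maximising the subtracted trace. -/

theorem Real.sInf_setOf_exists_sub_le {ι : Type*} {F : Set ι} (hF : F.Nonempty) (f : ι → ℝ)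
    (hf : BddAbove {t : ℝ | ∃ i ∈ F, t = f i}) (a : ℝ) :
    sInf {γ : ℝ | ∃ i ∈ F, a - f i ≤ γ} = a - sSup {t : ℝ | ∃ i ∈ F, t = f i} := by
  obtain ⟨i₀, hi₀⟩ := hF
  refine IsGLB.csInf_eq ⟨?_, fun b hb => ?_⟩ ⟨a - f i₀, i₀, hi₀, le_rfl⟩
  · rintro γ ⟨i, hi, hγ⟩
    linarith [le_csSup hf ⟨i, hi, rfl⟩]
  · have : sSup {t : ℝ | ∃ i ∈ F, t = f i} ≤ a - b :=
      csSup_le ⟨f i₀, i₀, hi₀, rfl⟩ fun _ ⟨i, hi, ht⟩ => by linarith [hb ⟨i, hi, le_rfl⟩]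
    linarith

namespace Matrix

variable {m n : Type*} [Fintype m] [Fintype n]

theorem inv_mul_add_inv_inv_mul_inv_eq_sub [DecidableEq m] [DecidableEq n] {α : Type*}
    [CommRing α] {A : Matrix n n α} {C : Matrix m m α} (U : Matrix n m α) (V : Matrix m n α)
    (hA : IsUnit A) (hC : IsUnit C) (hCA : IsUnit (V * A * U + C)) :
    A⁻¹ * (U * C⁻¹ * V + A⁻¹)⁻¹ * A⁻¹ = A⁻¹ - U * (V * A * U + C)⁻¹ * V := by
  have := hA.invertible
  have := hC.invertible
  rw [add_comm, add_mul_mul_inv_eq_sub _ _ _ _ (isUnit_nonsing_inv_iff.2 hA)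
    (isUnit_nonsing_inv_iff.2 hC) (by simpa only [inv_inv_of_invertible, add_comm] using hCA)]
  simp only [inv_inv_of_invertible, Matrix.mul_sub, Matrix.sub_mul, Matrix.mul_assoc,
    inv_mul_of_invertible, mul_inv_of_invertible, inv_mul_cancel_left_of_invertible,
    Matrix.one_mul, Matrix.mul_one, add_comm C]

theorem PosDef.transpose_mul_inv_mul_add_inv [DecidableEq m] [DecidableEq n]
    {Rn : Matrix n n ℝ} {Rv : Matrix m m ℝ}
    (hRn : Rn.PosDef) (hRv : Rv.PosDef) (V : Matrix m n ℝ) :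
    (Vᵀ * Rv⁻¹ * V + Rn⁻¹).PosDef :=
  .posSemidef_add (hRv.inv.posSemidef.conjTranspose_mul_mul_same V) hRn.inv

theorem PosDef.mul_mul_transpose_add {Rn : Matrix n n ℝ} {Rv : Matrix m m ℝ}
    (hRn : Rn.PosDef) (hRv : Rv.PosDef) (V : Matrix m n ℝ) :
    (V * Rn * Vᵀ + Rv).PosDef :=
  .posSemidef_add (hRn.posSemidef.mul_mul_conjTranspose_same V) hRv

theorem exists_isSymm_trace_le_fromBlocks_posSemidef_iff [DecidableEq n] {D : Matrix n n ℝ}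
    (hD : D.PosDef) (B : Matrix m n ℝ) (γ : ℝ) :
    (∃ Γ : Matrix m m ℝ, Γ.IsSymm ∧ Γ.trace ≤ γ ∧ (fromBlocks Γ B Bᵀ D).PosSemidef) ↔
      (B * D⁻¹ * Bᵀ).trace ≤ γ := by
  have := hD.isUnit.invertible
  have schur (Γ : Matrix m m ℝ) :
      (fromBlocks Γ B Bᵀ D).PosSemidef ↔ (Γ - B * D⁻¹ * Bᵀ).PosSemidef := by
    simpa only [conjTranspose_eq_transpose_of_trivial] using PosDef.fromBlocks₂₂ Γ B hD
  constructor
  · rintro ⟨Γ, -, hγ, hblock⟩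
    have := ((schur Γ).1 hblock).trace_nonneg
    rw [trace_sub] at this
    linarith
  · intro hγ
    have hpsd : (B * D⁻¹ * Bᵀ).PosSemidef := by
      simpa only [conjTranspose_eq_transpose_of_trivial] using
        hD.inv.posSemidef.mul_mul_conjTranspose_same B
    refine ⟨_, isHermitian_iff_isSymm.1 hpsd.isHermitian, hγ, (schur _).2 ?_⟩
    rw [sub_self]
    exact .zero

section

variable [DecidableEq m] [DecidableEq n] {Rn : Matrix n n ℝ} {Rv : Matrix m m ℝ}

theorem exists_isSymm_trace_le_fromBlocks_inv_posSemidef_iff (hRn : Rn.PosDef)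
    (hRv : Rv.PosDef) (V : Matrix m n ℝ) (γ : ℝ) :
    (∃ Γ : Matrix n n ℝ, Γ.IsSymm ∧ Γ.trace ≤ γ ∧
        (fromBlocks Γ Rn⁻¹ Rn⁻¹ (Vᵀ * Rv⁻¹ * V + Rn⁻¹)).PosSemidef) ↔
      Rn⁻¹.trace - (Vᵀ * (V * Rn * Vᵀ + Rv)⁻¹ * V).trace ≤ γ := by
  have h := exists_isSymm_trace_le_fromBlocks_posSemidef_iff
    (hRn.transpose_mul_inv_mul_add_inv hRv V) Rn⁻¹ γ
  rwa [isHermitian_iff_isSymm.1 hRn.inv.isHermitian, inv_mul_add_inv_inv_mul_inv_eq_sub _ _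
    hRn.isUnit hRv.isUnit (hRn.mul_mul_transpose_add hRv V).isUnit, trace_sub] at h

theorem trace_transpose_mul_inv_mul_le (hRn : Rn.PosDef) (hRv : Rv.PosDef) (V : Matrix m n ℝ) :
    (Vᵀ * (V * Rn * Vᵀ + Rv)⁻¹ * V).trace ≤ Rn⁻¹.trace := by
  have h :=
    (hRn.transpose_mul_inv_mul_add_inv hRv V).inv.posSemidef.conjTranspose_mul_mul_same Rn⁻¹
  rw [hRn.inv.isHermitian.eq, inv_mul_add_inv_inv_mul_inv_eq_sub _ _ hRn.isUnit hRv.isUnit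
    (hRn.mul_mul_transpose_add hRv V).isUnit] at h
  have := h.trace_nonneg
  rw [trace_sub] at this
  linarith

end

end Matrix

theorem bmi_program_optimal_value_general (M K : ℕ)
    (G : Matrix (Fin M) (Fin M) ℝ)
    (Rn : Matrix (Fin K) (Fin K) ℝ) (hRn : Rn.PosDef)
    (Rv : Matrix (Fin M) (Fin M) ℝ) (hRv : Rv.PosDef)
    (Rθ : Matrix (Fin K) (Fin K) ℝ)
    (P₀ : ℝ) (hP₀ : 0 < P₀)
    (F : Set (Matrix (Fin M) (Fin K) ℝ))
    (hF : F = {W | (W * (Rθ + Rn) * Wᵀ).trace ≤ P₀}) :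
    sInf {γ : ℝ | ∃ W ∈ F, ∃ Γ : Matrix (Fin K) (Fin K) ℝ, Γ.IsSymm ∧
        Γ.trace ≤ γ ∧
        (Matrix.fromBlocks Γ Rn⁻¹ Rn⁻¹ (Wᵀ * Gᵀ * Rv⁻¹ * G * W + Rn⁻¹)).PosSemidef}
      = (Rn⁻¹).trace -
        sSup {t : ℝ | ∃ W ∈ F,
          t = (Wᵀ * Gᵀ * (G * W * Rn * Wᵀ * Gᵀ + Rv)⁻¹ * G * W).trace} := by
  have hblock (W : Matrix (Fin M) (Fin K) ℝ) :
      Wᵀ * Gᵀ * Rv⁻¹ * G * W = (G * W)ᵀ * Rv⁻¹ * (G * W) := by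
    simp only [transpose_mul, Matrix.mul_assoc]
  have hvalue (W : Matrix (Fin M) (Fin K) ℝ) :
      Wᵀ * Gᵀ * (G * W * Rn * Wᵀ * Gᵀ + Rv)⁻¹ * G * W =
        (G * W)ᵀ * ((G * W) * Rn * (G * W)ᵀ + Rv)⁻¹ * (G * W) := by
    simp only [transpose_mul, Matrix.mul_assoc]
  simp only [hblock, hvalue, exists_isSymm_trace_le_fromBlocks_inv_posSemidef_iff hRn hRv]
  refine Real.sInf_setOf_exists_sub_le ⟨0, by simp [hF, hP₀.le]⟩ _ ⟨Rn⁻¹.trace, ?_⟩ _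
  rintro _ ⟨W, -, rfl⟩
  exact trace_transpose_mul_inv_mul_le hRn hRv _

/-- Lemma 2 (equality of optimal values): the optimal value of the
bilinear-matrix-inequality program (10) equals `Tr(Rₙ⁻¹)` minus the optimal value
of the trace-maximization problem (9). -/
theorem bmi_program_optimal_value (M K : ℕ)
    (G : Matrix (Fin M) (Fin M) ℝ)
    (Rn : Matrix (Fin K) (Fin K) ℝ) (hRn : Rn.PosDef)
    (Rv : Matrix (Fin M) (Fin M) ℝ) (hRv : Rv.PosDef)
    (Rθ : Matrix (Fin K) (Fin K) ℝ) (hRθ : Rθ.PosSemidef)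
    (P₀ : ℝ) (hP₀ : 0 < P₀)
    (F : Set (Matrix (Fin M) (Fin K) ℝ))
    (hF : F = {W | (W * (Rθ + Rn) * Wᵀ).trace ≤ P₀}) :
    sInf {γ : ℝ | ∃ W ∈ F, ∃ Γ : Matrix (Fin K) (Fin K) ℝ, Γ.IsSymm ∧
        Γ.trace ≤ γ ∧
        (Matrix.fromBlocks Γ Rn⁻¹ Rn⁻¹ (Wᵀ * Gᵀ * Rv⁻¹ * G * W + Rn⁻¹)).PosSemidef}
      = (Rn⁻¹).trace -
        sSup {t : ℝ | ∃ W ∈ F,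
          t = (Wᵀ * Gᵀ * (G * W * Rn * Wᵀ * Gᵀ + Rv)⁻¹ * G * W).trace} :=
  bmi_program_optimal_value_general M K G Rn hRn Rv hRv Rθ P₀ hP₀ F hF
end
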